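/- Up to a multiplicative real constant, f = det(I_m − θ̂θ)^{-1/2} is the unique element of the Grassmann algebra Λ_{2mn} satisfying Σ_{t=1}^{m} (A²)_{lt} ∂_{θ_{jt}} f = − θ̂_{lj} f for all 1 ≤ l ≤ m and 1 ≤ j ≤ 2n. -/

import Mathlib

noncomputable section

open Matrix

/-- The standard symplectic matrix `J = [[0, Iₙ],[-Iₙ, 0]]`, with entries in `Λ`. -/
def sympJ (n : ℕ) (Λ : Type*) [Ring Λ] :
    Matrix (Fin n ⊕ Fin n) (Fin n ⊕ Fin n) Λ :=
  Matrix.fromBlocks 0 1 (-1) 0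

/-- The determinant of a square matrix over a (possibly noncommutative) ring,
via the Leibniz formula with ordered products. -/
def ncDet {m : ℕ} {Λ : Type*} [Ring Λ] (M : Matrix (Fin m) (Fin m) Λ) : Λ :=
  ∑ σ : Equiv.Perm (Fin m),
    (Equiv.Perm.sign σ : ℤ) • ((List.finRange m).map fun i => M (σ i) i).prod

/-- The binomial coefficient `binom(-1/2, k)`, the `k`-th Taylor coefficient of
`(1+x)^{-1/2}`. -/
def invSqrtCoeff (k : ℕ) : ℝ :=
  (∏ i ∈ Finset.range k, (-(1 : ℝ) / 2 - (i : ℝ))) / (Nat.factorial k)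

/-!
Let `E = ∑ θᵢⱼ ∂ᵢⱼ` be the Euler operator: it is a derivation of `Λ` which multiplies a product
of `k` generators by `k`. The entries of `M = θ̂θ` are products of two generators, hence central
and nilpotent, so `A² = 1 - M` is invertible and the system can be solved for the derivatives:
every solution satisfies `E f = N f` with `N = tr ((1 - M)⁻¹ M)`. Since `E M = 2 M`, Jacobi's
formula gives `E (det (1 - M)) = -2 det (1 - M) N`, and then the truncated binomial series
`g = det (1 - M)^(-1/2)` satisfies `E g = N g` too. Finally, if `h = f - c g` has no constant
term, then `E h = N h` with `N` of positive degree, while `E` multiplies the lowest-degree part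
of `h` by its degree; hence `h` lies arbitrarily deep in the degree filtration and vanishes.
-/

open Finset

namespace Matrix

variable {n A : Type*} [Fintype n] [CommRing A]

theorem trace_mul_mem {I : Ideal A} (Y : Matrix n n A) {X : Matrix n n A}
    (hX : ∀ i j, X i j ∈ I) : (Y * X).trace ∈ I :=
  sum_mem fun i _ => sum_mem fun j _ => I.mul_mem_left _ (hX j i)

variable [DecidableEq n]

theorem det_one_sub_sub_one_mem {I : Ideal A} {X : Matrix n n A} (hX : ∀ i j, X i j ∈ I) :
    (1 - X).det - 1 ∈ I := by
  have hX0 : (Ideal.Quotient.mk I).mapMatrix X = 0 := by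
    ext i j
    exact Ideal.Quotient.eq_zero_iff_mem.mpr (hX i j)
  rw [← Ideal.Quotient.eq, RingHom.map_det, map_sub, map_one, hX0, sub_zero, det_one, map_one]

theorem adjugate_apply_eq_sum_perm (X : Matrix n n A) (i k : n) :
    X.adjugate i k = ∑ σ : Equiv.Perm n,
      if σ i = k then Equiv.Perm.sign σ • ∏ j ∈ univ.erase i, X (σ j) j else 0 := by
  rw [← col_apply X.adjugate k i, ← mulVec_single_one, ← cramer_eq_adjugate_mulVec, cramer_apply,
    det_apply]
  refine sum_congr rfl fun σ _ => ?_
  rw [← mul_prod_erase univ _ (mem_univ i), updateCol_self, Pi.single_apply]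
  split_ifs
  · rw [one_mul, prod_congr rfl fun j hj => updateCol_ne (ne_of_mem_erase hj)]
  · rw [zero_mul, smul_zero]

end Matrix

theorem ncDet_map {m : ℕ} {R Λ : Type*} [CommRing R] [Ring Λ] (f : R →+* Λ)
    (X : Matrix (Fin m) (Fin m) R) : ncDet (X.map f) = f X.det := by
  rw [det_apply, ncDet, map_sum]
  refine sum_congr rfl fun σ _ => ?_
  rw [Units.smul_def, map_zsmul, Fin.prod_univ_def, map_list_prod, List.map_map]
  rfl

namespace Derivation

variable {R A M : Type*} [CommSemiring R]

theorem leibniz_prod [CommSemiring A] [AddCommMonoid M] [Algebra R A] [Module A M] [Module R M]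
    (D : Derivation R A M) {ι : Type*} [DecidableEq ι] (s : Finset ι) (f : ι → A) :
    D (∏ i ∈ s, f i) = ∑ i ∈ s, (∏ j ∈ s.erase i, f j) • D (f i) := by
  induction s using Finset.induction_on with
  | empty => simp
  | insert a s ha ih =>
    rw [prod_insert ha, leibniz, ih, sum_insert ha, erase_insert ha, smul_sum, add_comm]
    congr 1
    refine sum_congr rfl fun i hi => ?_
    rw [erase_insert_of_ne (ne_of_mem_of_not_mem hi ha).symm,
      prod_insert fun h => ha (mem_of_mem_erase h), mul_smul]

variable {n : Type*} [Fintype n] [DecidableEq n] [CommRing A] [AddCommGroup M] [Algebra R A]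
  [Module A M] [Module R M] (D : Derivation R A M)

theorem map_det (X : Matrix n n A) : D X.det = ∑ i, ∑ k, X.adjugate i k • D (X k i) := by
  simp_rw [Matrix.adjugate_apply_eq_sum_perm, Finset.sum_smul, ite_smul, zero_smul]
  conv_rhs => enter [2, i]; rw [sum_comm]
  rw [sum_comm, Matrix.det_apply, map_sum]
  refine sum_congr rfl fun σ _ => ?_
  simp only [sum_ite_eq, mem_univ, if_true, Units.smul_def, map_zsmul, D.leibniz_prod, smul_sum,
    smul_assoc]

theorem map_det_of_eq_smul {X Y : Matrix n n A} {v : M} (h : ∀ i j, D (X i j) = Y i j • v) :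
    D X.det = (X.adjugate * Y).trace • v := by
  simp only [D.map_det, h, smul_smul, trace, Matrix.diag_apply, mul_apply, Finset.sum_smul]

end Derivation

theorem invSqrtCoeff_succ (k : ℕ) :
    2 * (k + 1) * invSqrtCoeff (k + 1) = -(2 * k + 1) * invSqrtCoeff k := by
  rw [invSqrtCoeff, invSqrtCoeff, prod_range_succ, Nat.factorial_succ]
  push_cast
  field_simp
  ring

section InvSqrtPoly

open Polynomial

def invSqrtPoly (d : ℕ) : ℝ[X] :=
  ∑ k ∈ range (d + 1), C (invSqrtCoeff k) * X ^ k

namespace invSqrtPoly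

theorem aeval_eq {A : Type*} [Semiring A] [Algebra ℝ A] (x : A) (d : ℕ) :
    aeval x (invSqrtPoly d) = ∑ k ∈ range (d + 1), invSqrtCoeff k • x ^ k := by
  simp [invSqrtPoly, Algebra.smul_def]

theorem coeff_zero (d : ℕ) : (invSqrtPoly d).coeff 0 = 1 := by
  simp [invSqrtPoly, coeff_X_pow, invSqrtCoeff]

theorem X_dvd_sub_one (d : ℕ) : X ∣ invSqrtPoly d - 1 := by
  simpa [coeff_zero] using X_dvd_sub_C (p := invSqrtPoly d)

/-- The truncation of `2 (1 + x) y' + y = 0`, the differential equation of `(1 + x)^(-1/2)`. -/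
theorem ode (d : ℕ) :
    2 * (1 + X) * derivative (invSqrtPoly d) + invSqrtPoly d
      = C ((2 * d + 1) * invSqrtCoeff d) * X ^ d := by
  induction d with
  | zero => simp [invSqrtPoly, invSqrtCoeff]
  | succ d ih =>
    have hrec := congrArg C (invSqrtCoeff_succ d)
    simp only [map_mul, map_add, map_neg, map_ofNat, map_natCast, map_one] at hrec ih ⊢
    rw [invSqrtPoly, sum_range_succ, ← invSqrtPoly, derivative_add, derivative_C_mul_X_pow]
    simp only [map_mul, map_add, map_natCast, map_one, Nat.cast_add, Nat.cast_one,
      add_tsub_cancel_right]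
    linear_combination ih + X ^ d * hrec

end invSqrtPoly

theorem Derivation.map_aeval_invSqrtPoly {A M : Type*} [CommRing A] [Algebra ℝ A]
    [AddCommGroup M] [Module A M] [Module ℝ M] (D : Derivation ℝ A M) {x : A} {v : M} {d : ℕ}
    (hx : D x = -(2 * (1 + x)) • v) (hd : x ^ d • v = 0) :
    D (aeval x (invSqrtPoly d)) = aeval x (invSqrtPoly d) • v := by
  obtain ⟨r, hr⟩ : ∃ r, 2 * (1 + X) * derivative (invSqrtPoly d) + invSqrtPoly d = C r * X ^ d :=
    ⟨_, invSqrtPoly.ode d⟩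
  have hode := congrArg (aeval x) hr
  simp only [map_add, map_mul, map_ofNat, map_one, aeval_X, aeval_C, map_pow] at hode
  rw [D.map_aeval, hx, smul_smul,
    show aeval x (derivative (invSqrtPoly d)) * -(2 * (1 + x))
      = aeval x (invSqrtPoly d) - algebraMap ℝ A r * x ^ d by linear_combination -hode,
    sub_smul, mul_smul, hd, smul_zero, sub_zero]

end InvSqrtPoly

def LinearMap.centerDerivation {R Λ : Type*} [CommRing R] [Ring Λ] [Algebra R Λ]
    (E : Module.End R Λ) (hE : ∀ a b, E (a * b) = E a * b + a * E b) :
    Derivation R (Subalgebra.center R Λ) Λ where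
  toLinearMap := E ∘ₗ (Subalgebra.center R Λ).val.toLinearMap
  map_one_eq_zero' := by simpa using hE 1 1
  leibniz' a b := by
    simp only [LinearMap.coe_comp, Function.comp_apply, AlgHom.toLinearMap_apply,
      Subalgebra.coe_val, Subalgebra.coe_mul, Subalgebra.smul_def, smul_eq_mul]
    rw [hE, Subalgebra.mem_center_iff.mp b.2, add_comm]

theorem LinearMap.centerDerivation_apply {R Λ : Type*} [CommRing R] [Ring Λ] [Algebra R Λ]
    (E : Module.End R Λ) (hE : ∀ a b, E (a * b) = E a * b + a * E b)
    (z : Subalgebra.center R Λ) : E.centerDerivation hE z = E z :=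
  rfl

namespace Grassmann

section Filtration

variable {K Λ ι κ : Type*} [Field K] [Ring Λ] [Algebra K Λ] (θ : Matrix ι κ Λ)

def monomial (l : List (ι × κ)) : Λ :=
  (l.map fun p => θ p.1 p.2).prod

@[simp]
theorem monomial_nil : monomial θ [] = 1 :=
  rfl

@[simp]
theorem monomial_cons (p : ι × κ) (l : List (ι × κ)) :
    monomial θ (p :: l) = θ p.1 p.2 * monomial θ l :=
  List.prod_cons

theorem monomial_append (l l' : List (ι × κ)) :
    monomial θ (l ++ l') = monomial θ l * monomial θ l' := by
  simp [monomial]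

variable (K) in
def filtration (p : ℕ) : Submodule K Λ :=
  Submodule.span K {y | ∃ l, p ≤ l.length ∧ monomial θ l = y}

variable {θ}

theorem monomial_mem_filtration {p : ℕ} {l : List (ι × κ)} (h : p ≤ l.length) :
    monomial θ l ∈ filtration K θ p :=
  Submodule.subset_span ⟨l, h, rfl⟩

theorem filtration_antitone : Antitone (filtration K θ) := fun _ _ hpq =>
  Submodule.span_mono fun _ ⟨l, hl, hy⟩ => ⟨l, hpq.trans hl, hy⟩

theorem mul_mem_filtration {p q : ℕ} {y z : Λ} (hy : y ∈ filtration K θ p)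
    (hz : z ∈ filtration K θ q) : y * z ∈ filtration K θ (p + q) := by
  induction hy using Submodule.span_induction with
  | mem y hy =>
    obtain ⟨l, hl, rfl⟩ := hy
    induction hz using Submodule.span_induction with
    | mem z hz =>
      obtain ⟨l', hl', rfl⟩ := hz
      rw [← monomial_append]
      exact monomial_mem_filtration (by simpa using Nat.add_le_add hl hl')
    | zero => simp
    | add a b _ _ ha hb => rw [mul_add]; exact add_mem ha hb
    | smul r a _ ha => rw [mul_smul_comm]; exact Submodule.smul_mem _ _ ha
  | zero => simp
  | add a b _ _ ha hb => rw [add_mul]; exact add_mem ha hb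
  | smul r a _ ha => rw [smul_mul_assoc]; exact Submodule.smul_mem _ _ ha

theorem pow_mem_filtration {p : ℕ} {y : Λ} (hy : y ∈ filtration K θ p) (k : ℕ) :
    y ^ k ∈ filtration K θ (p * k) := by
  induction k with
  | zero => simpa using monomial_mem_filtration (θ := θ) (l := []) le_rfl
  | succ k ih => rw [pow_succ, mul_add_one]; exact mul_mem_filtration ih hy

variable (hgen : Algebra.adjoin K (Set.range fun p : ι × κ => θ p.1 p.2) = ⊤)
include hgen

theorem filtration_zero_eq_top : filtration K θ 0 = ⊤ := by
  rw [eq_top_iff]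
  rintro y -
  have hy : y ∈ Algebra.adjoin K (Set.range fun p : ι × κ => θ p.1 p.2) := hgen ▸ trivial
  induction hy using Algebra.adjoin_induction with
  | mem y hy =>
    obtain ⟨p, rfl⟩ := hy
    simpa using monomial_mem_filtration (θ := θ) (K := K) (l := [p]) (Nat.zero_le _)
  | algebraMap r =>
    rw [Algebra.algebraMap_eq_smul_one]
    exact Submodule.smul_mem _ _ (monomial_mem_filtration (l := []) le_rfl)
  | add a b _ _ ha hb => exact add_mem ha hb
  | mul a b _ _ ha hb => simpa using mul_mem_filtration ha hb

theorem exists_sub_smul_one_mem_filtration_one (y : Λ) :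
    ∃ c : K, y - c • 1 ∈ filtration K θ 1 := by
  have hy : y ∈ filtration K θ 0 := filtration_zero_eq_top hgen ▸ Submodule.mem_top
  induction hy using Submodule.span_induction with
  | mem y hy =>
    obtain ⟨l, -, rfl⟩ := hy
    cases l with
    | nil => exact ⟨1, by simp⟩
    | cons p l => exact ⟨0, by simpa using monomial_mem_filtration (l := p :: l) (by simp)⟩
  | zero => exact ⟨0, by simp⟩
  | add a b _ _ ha hb =>
    obtain ⟨c, hc⟩ := ha
    obtain ⟨d, hd⟩ := hb
    exact ⟨c + d, by simpa [add_smul, add_sub_add_comm] using add_mem hc hd⟩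
  | smul r a _ ha =>
    obtain ⟨c, hc⟩ := ha
    exact ⟨r * c, by simpa [smul_sub, mul_smul] using Submodule.smul_mem _ r hc⟩

theorem val_mem_filtration_of_mem_span {p : ℕ} {S : Set (Subalgebra.center K Λ)}
    (hS : ∀ z ∈ S, (z : Λ) ∈ filtration K θ p) {z : Subalgebra.center K Λ}
    (hz : z ∈ Ideal.span S) : (z : Λ) ∈ filtration K θ p := by
  induction hz using Submodule.span_induction with
  | mem z hz => exact hS z hz
  | zero => exact zero_mem _
  | add a b _ _ ha hb => exact add_mem ha hb
  | smul a z _ hz =>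
    have ha : (a : Λ) ∈ filtration K θ 0 := filtration_zero_eq_top hgen ▸ Submodule.mem_top
    simpa using mul_mem_filtration ha hz

end Filtration

theorem aeval_invSqrtPoly_sub_one_mem_filtration {Λ ι κ : Type*} [Ring Λ] [Algebra ℝ Λ]
    {θ : Matrix ι κ Λ} (hgen : Algebra.adjoin ℝ (Set.range fun p : ι × κ => θ p.1 p.2) = ⊤)
    {y : Λ} (hy : y ∈ filtration ℝ θ 1) (d : ℕ) :
    Polynomial.aeval y (invSqrtPoly d) - 1 ∈ filtration ℝ θ 1 := by
  obtain ⟨Q, hQ⟩ := invSqrtPoly.X_dvd_sub_one d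
  have hQy : Polynomial.aeval y (invSqrtPoly d) - 1 = y * Polynomial.aeval y Q := by
    rw [← map_one (Polynomial.aeval (R := ℝ) y), ← map_sub, hQ, map_mul, Polynomial.aeval_X]
  have hQ0 : Polynomial.aeval y Q ∈ filtration ℝ θ 0 :=
    filtration_zero_eq_top hgen ▸ Submodule.mem_top
  rw [hQy]
  simpa using mul_mem_filtration hy hQ0

section Anticommuting

variable {K Λ ι κ : Type*} [Field K] [Ring Λ] [Algebra K Λ] {θ : Matrix ι κ Λ}
  (hodd : ∀ i j k l, θ i j * θ k l = -(θ k l * θ i j))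
include hodd

theorem commute_mul_generators
    (hgen : Algebra.adjoin K (Set.range fun p : ι × κ => θ p.1 p.2) = ⊤)
    (i : ι) (j : κ) (k : ι) (l : κ) (y : Λ) : Commute (θ i j * θ k l) y := by
  have hy : y ∈ Algebra.adjoin K (Set.range fun p : ι × κ => θ p.1 p.2) := hgen ▸ trivial
  replace hy : y ∈ Subalgebra.centralizer K {θ i j * θ k l} := by
    refine Algebra.adjoin_le ?_ hy
    rintro _ ⟨⟨a, b⟩, rfl⟩ _ rfl
    rw [mul_assoc, hodd k l a b, mul_neg, ← mul_assoc, hodd i j a b, neg_mul, neg_neg, mul_assoc]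
  exact (Subalgebra.mem_centralizer_iff K).mp hy _ rfl

variable (K) [CharZero K]
include K

theorem mul_self_eq_zero (i : ι) (j : κ) : θ i j * θ i j = 0 := by
  have h : (2 : K) • (θ i j * θ i j) = 0 := by
    rw [two_smul]
    nth_rewrite 1 [hodd]
    exact neg_add_cancel _
  simpa using h

theorem mul_monomial_eq_zero_of_mem {p : ι × κ} {l : List (ι × κ)} (hp : p ∈ l) :
    θ p.1 p.2 * monomial θ l = 0 := by
  induction l with
  | nil => simp at hp
  | cons q l ih =>
    rw [monomial_cons, ← mul_assoc]
    rcases List.mem_cons.mp hp with rfl | hp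
    · rw [mul_self_eq_zero K hodd, zero_mul]
    · rw [hodd, neg_mul, mul_assoc, ih hp, mul_zero, neg_zero]

theorem monomial_eq_zero_of_not_nodup {l : List (ι × κ)} (hl : ¬l.Nodup) : monomial θ l = 0 := by
  induction l with
  | nil => simp at hl
  | cons p l ih =>
    rw [monomial_cons]
    by_cases hp : p ∈ l
    · exact mul_monomial_eq_zero_of_mem K hodd hp
    · rw [ih (by simpa [hp] using hl), mul_zero]

variable {K}

theorem eq_zero_of_mem_filtration [Fintype ι] [Fintype κ] {p : ℕ}
    (hp : Fintype.card ι * Fintype.card κ < p) {y : Λ} (hy : y ∈ filtration K θ p) : y = 0 := by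
  induction hy using Submodule.span_induction with
  | mem y hy =>
    obtain ⟨l, hl, rfl⟩ := hy
    refine monomial_eq_zero_of_not_nodup K hodd fun hnd => ?_
    have := hnd.length_le_card
    rw [Fintype.card_prod] at this
    omega
  | zero => rfl
  | add a b _ _ ha hb => rw [ha, hb, add_zero]
  | smul r a _ ha => rw [ha, smul_zero]

end Anticommuting

section Euler

variable {K Λ ι κ : Type*} [Field K] [Ring Λ] [Algebra K Λ] [Fintype ι] [Fintype κ]
  {θ : Matrix ι κ Λ}

variable (θ) in
def euler (D : ι → κ → Module.End K Λ) : Module.End K Λ :=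
  ∑ i, ∑ j, LinearMap.mulLeft K (θ i j) ∘ₗ D i j

theorem euler_apply (D : ι → κ → Module.End K Λ) (u : Λ) :
    euler θ D u = ∑ i, ∑ j, θ i j * D i j u := by
  simp [euler]

theorem euler_one {D : ι → κ → Module.End K Λ} (hD1 : ∀ i j, D i j 1 = 0) :
    euler θ D 1 = 0 := by
  simp [euler_apply, hD1]

variable [DecidableEq ι] [DecidableEq κ] {D : ι → κ → Module.End K Λ}
  (hodd : ∀ i j k l, θ i j * θ k l = -(θ k l * θ i j))
  (hD1 : ∀ i j, D i j 1 = 0)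
  (hDθ : ∀ i j k l (u : Λ),
    D i j (θ k l * u) = (if k = i ∧ l = j then u else 0) - θ k l * D i j u)

include hodd hDθ in
theorem euler_generator_mul (k : ι) (l : κ) (u : Λ) :
    euler θ D (θ k l * u) = θ k l * (u + euler θ D u) := by
  have hswap : ∀ i j, θ i j * (θ k l * D i j u) = -(θ k l * (θ i j * D i j u)) := fun i j => by
    rw [← mul_assoc, hodd, neg_mul, mul_assoc]
  simp [euler_apply, hDθ, mul_sub, hswap, sum_add_distrib, mul_add, mul_sum, ite_and]

include hodd hDθ in
theorem euler_monomial_mul (l : List (ι × κ)) (u : Λ) :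
    euler θ D (monomial θ l * u) = l.length • (monomial θ l * u) + monomial θ l * euler θ D u := by
  induction l generalizing u with
  | nil => simp
  | cons p l ih =>
    rw [monomial_cons, mul_assoc, euler_generator_mul hodd hDθ, ih, mul_add, mul_add,
      mul_smul_comm, List.length_cons, succ_nsmul, mul_assoc]
    abel

include hodd hD1 hDθ in
theorem euler_monomial (l : List (ι × κ)) :
    euler θ D (monomial θ l) = l.length • monomial θ l := by
  simpa [euler_one hD1] using euler_monomial_mul hodd hDθ l 1

include hodd hD1 hDθ in
theorem euler_mul (hgen : Algebra.adjoin K (Set.range fun p : ι × κ => θ p.1 p.2) = ⊤)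
    (a b : Λ) : euler θ D (a * b) = euler θ D a * b + a * euler θ D b := by
  have ha : a ∈ filtration K θ 0 := filtration_zero_eq_top hgen ▸ Submodule.mem_top
  induction ha using Submodule.span_induction with
  | mem a ha =>
    obtain ⟨l, -, rfl⟩ := ha
    rw [euler_monomial_mul hodd hDθ, euler_monomial hodd hD1 hDθ, smul_mul_assoc]
  | zero => simp
  | add a a' _ _ ha ha' => simp only [add_mul, map_add, ha, ha']; abel
  | smul r a _ ha => simp only [smul_mul_assoc, map_smul, ha, smul_add]

include hodd hD1 hDθ in
theorem smul_sub_euler_mem_filtration {p : ℕ} {y : Λ} (hy : y ∈ filtration K θ p) :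
    (p : K) • y - euler θ D y ∈ filtration K θ (p + 1) := by
  induction hy using Submodule.span_induction with
  | mem y hy =>
    obtain ⟨l, hl, rfl⟩ := hy
    rw [euler_monomial hodd hD1 hDθ, ← Nat.cast_smul_eq_nsmul K, ← sub_smul]
    rcases hl.eq_or_lt with rfl | hlt
    · simp
    · exact Submodule.smul_mem _ _ (monomial_mem_filtration hlt)
  | zero => simp
  | add a b _ _ ha hb => simpa [smul_add, add_sub_add_comm] using add_mem ha hb
  | smul r a _ ha => simpa [smul_comm (p : K) r, ← smul_sub] using Submodule.smul_mem _ r ha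

variable [CharZero K]

include hodd hD1 hDθ in
theorem eq_zero_of_euler_eq_mul {N y : Λ} (hN : N ∈ filtration K θ 1)
    (hy : y ∈ filtration K θ 1) (hEy : euler θ D y = N * y) : y = 0 := by
  -- Modulo `filtration (q + 2)`, `E` acts on `filtration (q + 1)` as `q + 1`, and `N * ·` as `0`.
  have hmem : ∀ q, y ∈ filtration K θ (q + 1) := by
    intro q
    induction q with
    | zero => exact hy
    | succ q ih =>
      have hE : euler θ D y ∈ filtration K θ (q + 1 + 1) := by
        simpa [hEy, add_comm] using mul_mem_filtration hN ih
      have hsmul : ((q + 1 : ℕ) : K) • y ∈ filtration K θ (q + 1 + 1) := by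
        simpa using add_mem (smul_sub_euler_mem_filtration hodd hD1 hDθ ih) hE
      exact (Submodule.smul_mem_iff _ (Nat.cast_ne_zero.mpr q.succ_ne_zero)).mp hsmul
  exact eq_zero_of_mem_filtration hodd (Nat.lt_succ_self _) (hmem _)

include hodd hD1 hDθ in
theorem exists_eq_smul_of_euler_eq_mul
    (hgen : Algebra.adjoin K (Set.range fun p : ι × κ => θ p.1 p.2) = ⊤) {N f g : Λ}
    (hN : N ∈ filtration K θ 1) (hg : g - 1 ∈ filtration K θ 1)
    (hEf : euler θ D f = N * f) (hEg : euler θ D g = N * g) : ∃ c : K, f = c • g := by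
  obtain ⟨c, hc⟩ := exists_sub_smul_one_mem_filtration_one hgen f
  refine ⟨c, sub_eq_zero.mp (eq_zero_of_euler_eq_mul hodd hD1 hDθ hN ?_ ?_)⟩
  · rw [show f - c • g = (f - c • 1) - c • (g - 1) by rw [smul_sub]; abel]
    exact sub_mem hc (Submodule.smul_mem _ _ hg)
  · rw [map_sub, map_smul, hEf, hEg, mul_sub, mul_smul_comm]

end Euler

end Grassmann

open Grassmann

theorem sympJ_eq_map_intCast (n : ℕ) (Λ : Type*) [Ring Λ] :
    sympJ n Λ = (sympJ n ℤ).map (↑) := by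
  rw [sympJ, sympJ, fromBlocks_map, Matrix.map_neg _ Int.cast_neg,
    Matrix.map_one _ Int.cast_zero Int.cast_one, Matrix.map_zero _ Int.cast_zero]

section Symplectic

variable {m n : ℕ} {K Λ : Type*} [Field K] [Ring Λ] [Algebra K Λ]
  {θ : Matrix (Fin n ⊕ Fin n) (Fin m) Λ}

theorem transpose_mul_sympJ_apply (l : Fin m) (j : Fin n ⊕ Fin n) :
    (θᵀ * sympJ n Λ) l j = ∑ k, sympJ n ℤ k j • θ k l := by
  simp only [sympJ_eq_map_intCast n Λ, mul_apply, transpose_apply, map_apply, zsmul_eq_mul,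
    Int.cast_comm]

theorem transpose_mul_sympJ_mul_apply (a b : Fin m) :
    (θᵀ * sympJ n Λ * θ) a b = ∑ j, ∑ k, sympJ n ℤ k j • (θ k a * θ j b) := by
  rw [mul_apply]
  simp only [transpose_mul_sympJ_apply, sum_mul, smul_mul_assoc]

theorem transpose_mul_sympJ_mul_apply_mem_filtration (a b : Fin m) :
    (θᵀ * sympJ n Λ * θ) a b ∈ filtration K θ 2 := by
  rw [transpose_mul_sympJ_mul_apply]
  refine sum_mem fun j _ => sum_mem fun k _ => zsmul_mem ?_ _
  simpa using monomial_mem_filtration (K := K) (θ := θ) (l := [(k, a), (j, b)]) le_rfl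

variable (hodd : ∀ i j k l, θ i j * θ k l = -(θ k l * θ i j))
include hodd

theorem mul_transpose_mul_sympJ_apply (i : Fin n ⊕ Fin n) (s l : Fin m) (j : Fin n ⊕ Fin n) :
    θ i s * (θᵀ * sympJ n Λ) l j = -((θᵀ * sympJ n Λ) l j * θ i s) := by
  simp only [transpose_mul_sympJ_apply, mul_sum, sum_mul, ← sum_neg_distrib, mul_smul_comm,
    smul_mul_assoc, hodd i s, smul_neg]

theorem euler_transpose_mul_sympJ_mul_apply {D : (Fin n ⊕ Fin n) → Fin m → Module.End K Λ}
    (hD1 : ∀ i j, D i j 1 = 0)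
    (hDθ : ∀ i j k l (u : Λ),
      D i j (θ k l * u) = (if k = i ∧ l = j then u else 0) - θ k l * D i j u)
    (a b : Fin m) :
    euler θ D ((θᵀ * sympJ n Λ * θ) a b) = 2 • (θᵀ * sympJ n Λ * θ) a b := by
  have hpair : ∀ k j, euler θ D (θ k a * θ j b) = 2 • (θ k a * θ j b) := fun k j => by
    simpa using euler_monomial hodd hD1 hDθ [(k, a), (j, b)]
  simp only [transpose_mul_sympJ_mul_apply, map_sum, map_zsmul, hpair, smul_sum, smul_comm 2]

/-- Products of two generators are central, so `θᵀ J θ` is a matrix over the commutative centre. -/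
theorem exists_map_val_eq_transpose_mul_sympJ_mul
    (hgen : Algebra.adjoin K (Set.range fun p : (Fin n ⊕ Fin n) × Fin m => θ p.1 p.2) = ⊤) :
    ∃ Mc : Matrix (Fin m) (Fin m) (Subalgebra.center K Λ),
      Mc.map Subtype.val = θᵀ * sympJ n Λ * θ := by
  refine ⟨of fun a b => ⟨(θᵀ * sympJ n Λ * θ) a b, Subalgebra.mem_center_iff.mpr fun y => ?_⟩, rfl⟩
  rw [transpose_mul_sympJ_mul_apply]
  exact Commute.sum_right _ _ _ fun j _ => Commute.sum_right _ _ _ fun k _ =>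
    (commute_mul_generators hodd hgen k a j b y).symm.smul_right _

theorem eq_zero_of_mem_filtration_of_two_mul_lt [CharZero K] {p : ℕ} (hp : 2 * (n * m) < p)
    {y : Λ} (hy : y ∈ filtration K θ p) : y = 0 := by
  refine eq_zero_of_mem_filtration hodd ?_ hy
  rw [Fintype.card_sum, Fintype.card_fin, Fintype.card_fin]
  linarith

end Symplectic

section Solution

variable {m n : ℕ} {Λ : Type*} [Ring Λ] [Algebra ℝ Λ] {θ : Matrix (Fin n ⊕ Fin n) (Fin m) Λ}
  {Mc : Matrix (Fin m) (Fin m) (Subalgebra.center ℝ Λ)}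
  (hMc : Mc.map Subtype.val = θᵀ * sympJ n Λ * θ)
  (hodd : ∀ i j k l, θ i j * θ k l = -(θ k l * θ i j))
  (hgen : Algebra.adjoin ℝ (Set.range fun p : (Fin n ⊕ Fin n) × Fin m => θ p.1 p.2) = ⊤)
  {D : (Fin n ⊕ Fin n) → Fin m → Module.End ℝ Λ} (hD1 : ∀ i j, D i j 1 = 0)
  (hDθ : ∀ i j k l (u : Λ),
    D i j (θ k l * u) = (if k = i ∧ l = j then u else 0) - θ k l * D i j u)
  {f : Λ}
  (hf : ∀ (l : Fin m) (j : Fin n ⊕ Fin n),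
    ∑ t : Fin m, ((1 - θᵀ * sympJ n Λ * θ : Matrix (Fin m) (Fin m) Λ)) l t * D j t f
      = -((θᵀ * sympJ n Λ) l j * f))
include hMc

theorem map_val_one_sub : (1 - Mc).map Subtype.val = 1 - θᵀ * sympJ n Λ * θ := by
  rw [← hMc]
  simpa using map_sub (Subalgebra.center ℝ Λ).val.mapMatrix 1 Mc

theorem ncDet_one_sub_eq : ncDet (1 - θᵀ * sympJ n Λ * θ) = ((1 - Mc).det : Λ) := by
  rw [← map_val_one_sub hMc]
  exact ncDet_map (Subalgebra.center ℝ Λ).val.toRingHom (1 - Mc)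

include hgen in
theorem val_mem_filtration_two_of_mem_span {z : Subalgebra.center ℝ Λ}
    (hz : z ∈ Ideal.span (Set.range fun p : Fin m × Fin m => Mc p.1 p.2)) :
    (z : Λ) ∈ filtration ℝ θ 2 := by
  refine val_mem_filtration_of_mem_span hgen ?_ hz
  rintro _ ⟨⟨a, b⟩, rfl⟩
  change (Mc a b : Λ) ∈ _
  rw [show (Mc a b : Λ) = (θᵀ * sympJ n Λ * θ) a b from congrFun (congrFun hMc a) b]
  exact transpose_mul_sympJ_mul_apply_mem_filtration a b

include hgen in
theorem ncDet_one_sub_sub_one_mem_filtration :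
    ncDet (1 - θᵀ * sympJ n Λ * θ) - 1 ∈ filtration ℝ θ 2 := by
  rw [ncDet_one_sub_eq hMc]
  exact val_mem_filtration_two_of_mem_span hMc hgen
    (det_one_sub_sub_one_mem fun i j => Ideal.subset_span ⟨(i, j), rfl⟩)

include hodd hgen in
theorem isUnit_det_one_sub : IsUnit (1 - Mc).det := by
  have hnil : IsNilpotent ((1 - Mc).det - 1) := by
    refine ⟨n * m + 1, Subtype.val_injective ?_⟩
    have := pow_mem_filtration (ncDet_one_sub_sub_one_mem_filtration hMc hgen) (n * m + 1)
    rw [ncDet_one_sub_eq hMc] at this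
    exact eq_zero_of_mem_filtration_of_two_mul_lt hodd (p := 2 * (n * m + 1)) (by omega)
      (by simpa using this)
  simpa using hnil.isUnit_one_add

include hf in
theorem partial_eq_of_solution (hB : IsUnit (1 - Mc).det) (j : Fin n ⊕ Fin n) (s : Fin m) :
    D j s f = ∑ l, -(((1 - Mc)⁻¹ s l : Λ) * ((θᵀ * sympJ n Λ) l j * f)) := by
  have hinv : (1 - Mc)⁻¹.map Subtype.val * (1 - θᵀ * sympJ n Λ * θ) = 1 := by
    have := congrArg (Subalgebra.center ℝ Λ).val.mapMatrix (nonsing_inv_mul _ hB)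
    rwa [map_mul, map_one, AlgHom.mapMatrix_apply, AlgHom.mapMatrix_apply, Subalgebra.coe_val,
      map_val_one_sub hMc] at this
  have hv : (1 - θᵀ * sympJ n Λ * θ) *ᵥ (fun t => D j t f)
      = fun l => -((θᵀ * sympJ n Λ) l j * f) := funext fun l => hf l j
  have := congrFun (congrArg ((1 - Mc)⁻¹.map Subtype.val *ᵥ ·) hv) s
  rw [mulVec_mulVec, hinv, one_mulVec] at this
  simpa [mulVec, dotProduct] using this

include hodd hf in
theorem euler_eq_mul_of_solution (hB : IsUnit (1 - Mc).det) :
    euler θ D f = ((trace ((1 - Mc)⁻¹ * Mc) : Subalgebra.center ℝ Λ) : Λ) * f := by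
  have hterm : ∀ j s l, θ j s * -(((1 - Mc)⁻¹ s l : Λ) * ((θᵀ * sympJ n Λ) l j * f))
      = ((1 - Mc)⁻¹ s l : Λ) * ((θᵀ * sympJ n Λ) l j * θ j s) * f := fun j s l => by
    rw [mul_neg, ← mul_assoc, Subalgebra.mem_center_iff.mp ((1 - Mc)⁻¹ s l).2, mul_assoc,
      ← mul_assoc (θ j s), mul_transpose_mul_sympJ_apply hodd, neg_mul, mul_neg, neg_neg]
    simp only [mul_assoc]
  have hM : ∀ l s, (Mc l s : Λ) = ∑ j, (θᵀ * sympJ n Λ) l j * θ j s := fun l s => by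
    rw [← mul_apply, ← hMc]
    rfl
  calc euler θ D f
      = ∑ s, ∑ l, ∑ j, ((1 - Mc)⁻¹ s l : Λ) * ((θᵀ * sympJ n Λ) l j * θ j s) * f := by
        simp only [euler_apply, partial_eq_of_solution hMc hf hB, mul_sum, hterm]
        rw [sum_comm]
        exact sum_congr rfl fun s _ => sum_comm
    _ = _ := by
        simp only [trace, diag_apply, mul_apply (M := (1 - Mc)⁻¹),
          AddSubmonoidClass.coe_finsetSum, Subalgebra.coe_mul, hM, sum_mul, mul_sum]

/-- Jacobi's formula, with `E M = 2 M` entrywise. -/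
theorem centerDerivation_det_one_sub (hB : IsUnit (1 - Mc).det) :
    (euler θ D).centerDerivation (euler_mul hodd hD1 hDθ hgen) (1 - Mc).det
      = -(2 * (1 - Mc).det) • ((trace ((1 - Mc)⁻¹ * Mc) : Subalgebra.center ℝ Λ) : Λ) := by
  have hadj : (1 - Mc).adjugate = (1 - Mc).det • (1 - Mc)⁻¹ := by
    rw [nonsing_inv_apply _ hB, smul_smul, hB.mul_val_inv, one_smul]
  rw [Derivation.map_det_of_eq_smul _ (Y := Mc) (v := (-2 : Λ)), hadj, smul_mul, trace_smul]
  · have h2 : ((2 : Subalgebra.center ℝ Λ) : Λ) = 2 := map_ofNat (Subalgebra.center ℝ Λ).val 2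
    simp only [Subalgebra.smul_def, smul_eq_mul, Subalgebra.coe_mul, Subalgebra.coe_neg, h2]
    noncomm_ring
  · intro i j
    have hentry := congrFun (congrFun (map_val_one_sub hMc) i) j
    have hM := congrFun (congrFun hMc i) j
    simp only [map_apply] at hentry hM
    rw [LinearMap.centerDerivation_apply, hentry, Matrix.sub_apply, map_sub, one_apply,
      apply_ite (euler θ D), euler_one hD1, map_zero, ite_self, zero_sub,
      euler_transpose_mul_sympJ_mul_apply hodd hD1 hDθ, Subalgebra.smul_def, smul_eq_mul, hM,
      mul_neg, two_smul, mul_two]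

include hodd hgen hD1 hDθ in
theorem euler_aeval_invSqrtPoly (hB : IsUnit (1 - Mc).det) {d : ℕ}
    (hd : (ncDet (1 - θᵀ * sympJ n Λ * θ) - 1) ^ d
      * ((trace ((1 - Mc)⁻¹ * Mc) : Subalgebra.center ℝ Λ) : Λ) = 0) :
    euler θ D (Polynomial.aeval (ncDet (1 - θᵀ * sympJ n Λ * θ) - 1) (invSqrtPoly d))
      = ((trace ((1 - Mc)⁻¹ * Mc) : Subalgebra.center ℝ Λ) : Λ)
        * Polynomial.aeval (ncDet (1 - θᵀ * sympJ n Λ * θ) - 1) (invSqrtPoly d) := by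
  have hx : ncDet (1 - θᵀ * sympJ n Λ * θ) - 1
      = (Subalgebra.center ℝ Λ).val ((1 - Mc).det - 1) := by
    rw [ncDet_one_sub_eq hMc, map_sub, map_one]
    rfl
  rw [hx, Polynomial.aeval_algHom_apply, Subalgebra.coe_val,
    ← LinearMap.centerDerivation_apply _ (euler_mul hodd hD1 hDθ hgen),
    Derivation.map_aeval_invSqrtPoly, Subalgebra.smul_def, smul_eq_mul,
    Subalgebra.mem_center_iff.mp (trace ((1 - Mc)⁻¹ * Mc)).2]
  · rw [map_sub, Derivation.map_one_eq_zero, sub_zero, add_sub_cancel]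
    exact centerDerivation_det_one_sub hMc hodd hgen hD1 hDθ hB
  · rwa [Subalgebra.smul_def, smul_eq_mul, Subalgebra.coe_pow, ← Subalgebra.coe_val, ← hx]

end Solution

theorem det_inv_sqrt_unique_general (m n : ℕ) (Λ : Type*) [Ring Λ] [Algebra ℝ Λ]
    (θ : Matrix (Fin n ⊕ Fin n) (Fin m) Λ)
    (hodd : ∀ i j k l, θ i j * θ k l = -(θ k l * θ i j))
    (hgen : Algebra.adjoin ℝ
      (Set.range fun p : (Fin n ⊕ Fin n) × Fin m => θ p.1 p.2) = ⊤)
    (D : (Fin n ⊕ Fin n) → Fin m → Module.End ℝ Λ)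
    (hD1 : ∀ i j, D i j 1 = 0)
    (hDθ : ∀ i j k l (u : Λ),
      D i j (θ k l * u) = (if k = i ∧ l = j then u else 0) - θ k l * D i j u)
    (f : Λ)
    (hf : ∀ (l : Fin m) (j : Fin n ⊕ Fin n),
      ∑ t : Fin m, ((1 - θᵀ * sympJ n Λ * θ : Matrix (Fin m) (Fin m) Λ)) l t * D j t f
        = -((θᵀ * sympJ n Λ) l j * f)) :
    ∃ c : ℝ, f = c • ∑ k ∈ Finset.range (n * m + 1),
      invSqrtCoeff k • (ncDet (1 - θᵀ * sympJ n Λ * θ) - 1) ^ k := by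
  obtain ⟨Mc, hMc⟩ := exists_map_val_eq_transpose_mul_sympJ_mul (K := ℝ) hodd hgen
  have hx := ncDet_one_sub_sub_one_mem_filtration hMc hgen
  have hN : ((trace ((1 - Mc)⁻¹ * Mc) : Subalgebra.center ℝ Λ) : Λ) ∈ filtration ℝ θ 2 :=
    val_mem_filtration_two_of_mem_span hMc hgen
      (trace_mul_mem _ fun i j => Ideal.subset_span ⟨(i, j), rfl⟩)
  have hB := isUnit_det_one_sub hMc hodd hgen
  have hd := eq_zero_of_mem_filtration_of_two_mul_lt hodd (Nat.lt_add_of_pos_right two_pos)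
    (mul_mem_filtration (pow_mem_filtration hx (n * m)) hN)
  rw [← invSqrtPoly.aeval_eq]
  exact exists_eq_smul_of_euler_eq_mul hodd hD1 hDθ hgen (filtration_antitone one_le_two hN)
    (aeval_invSqrtPoly_sub_one_mem_filtration hgen (filtration_antitone one_le_two hx) _)
    (euler_eq_mul_of_solution hMc hodd hf hB) (euler_aeval_invSqrtPoly hMc hodd hgen hD1 hDθ hB hd)

/-- in the Grassmann algebra `Λ_{2mn}` generated by the `θᵢⱼ`,
any solution `f` of the system `Σ_t (A²)_{lt} ∂_{θ_{jt}} f = −θ̂_{lj} f`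
(for all `l, j`) is a real scalar multiple of `det(I_m − θ̂θ)^{-1/2}`; i.e. the
system determines `f = det(A)⁻¹` uniquely up to a multiplicative constant. -/
theorem det_inv_sqrt_unique (m n : ℕ) (Λ : Type*) [Ring Λ] [Algebra ℝ Λ]
    (θ : Matrix (Fin n ⊕ Fin n) (Fin m) Λ)
    (hodd : ∀ i j k l, θ i j * θ k l = -(θ k l * θ i j))
    (hcent : ∀ i j k l (c : Λ), Commute (θ i j * θ k l) c)
    (hgen : Algebra.adjoin ℝ
      (Set.range fun p : (Fin n ⊕ Fin n) × Fin m => θ p.1 p.2) = ⊤)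
    (D : (Fin n ⊕ Fin n) → Fin m → Module.End ℝ Λ)
    (hD1 : ∀ i j, D i j 1 = 0)
    (hDθ : ∀ i j k l (u : Λ),
      D i j (θ k l * u) = (if k = i ∧ l = j then u else 0) - θ k l * D i j u)
    (f : Λ)
    (hf : ∀ (l : Fin m) (j : Fin n ⊕ Fin n),
      ∑ t : Fin m, ((1 - θᵀ * sympJ n Λ * θ : Matrix (Fin m) (Fin m) Λ)) l t * D j t f
        = -((θᵀ * sympJ n Λ) l j * f)) :
    ∃ c : ℝ, f = c • ∑ k ∈ Finset.range (n * m + 1),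
      invSqrtCoeff k • (ncDet (1 - θᵀ * sympJ n Λ * θ) - 1) ^ k :=
  det_inv_sqrt_unique_general m n Λ θ hodd hgen D hD1 hDθ f hf
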